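/- Let H⁺, H⁻ be complex Banach spaces, and let A⁺ be a bounded operator on H⁺ with Re λ > 0 for every λ in its spectrum and A⁻ a bounded operator on H⁻ with Re μ < 0 for every μ in its spectrum. Let A : ℝ → B(H⁺ × H⁻) be a family of bounded operators on H⁺ × H⁻ having a full asymptotic expansion with bounded coefficients (A_k)_{k∈ℕ} as ρ → 0, whose leading term A₀ is the block-diagonal operator (x⁺, x⁻) ↦ (A⁺x⁺, A⁻x⁻). Then for every N ∈ ℕ there exist bounded operators M₀, …, M_{N−1} on H⁺ × H⁻ with M₀ = I, and bounded operators Λ₀, …, Λ_{N−1} on H⁺ × H⁻ each of which is block-diagonal (i.e. maps H⁺ × {0} into H⁺ × {0} and {0} × H⁻ into {0} × H⁻), such that ‖A(ρ)·(Σ_{k=0}^{N−1} ρ^k M_k) − (Σ_{k=0}^{N−1} ρ^k M_k)·(Σ_{k=0}^{N−1} ρ^k Λ_k)‖ = O(|ρ|^N) as ρ → 0. -/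

import Mathlib

/-!
The coefficient of `ρ ^ n` in `A(ρ) M(ρ) - M(ρ) Λ(ρ)` is `A₀ Mₙ - Mₙ A₀ - Λₙ` plus terms involving
only lower coefficients, so `Mₙ` and `Λₙ` can be chosen recursively once every `D` can be written
as `A₀ X - X A₀ - Λ` with `Λ` block-diagonal. Taking for `Λ` the diagonal part of `-D` and `X`
off-diagonal, this reduces to the Sylvester equations `A⁺ x - x A⁻ = D₁₂` and `A⁻ y - y A⁺ = D₂₁`.
These are solvable because the spectra of `A⁺` and `A⁻` are disjoint: left and right composition
are commuting operators with spectra inside `σ(A⁺)` and `σ(A⁻)`. If commuting `u`, `v` in a Banach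
algebra had `u - v` singular, a character of the bicommutant of `{u, v}` (a commutative Banach
algebra computing the same spectra) vanishing on `u - v` would give a point of `σ(u) ∩ σ(v)`.
-/

open Filter Asymptotics Finset Topology ContinuousLinearMap MulOpposite

namespace Subalgebra

variable {R A : Type*} [CommRing R] [Ring A] [Algebra R A]

theorem isUnit_centralizer_iff {s : Set A} {x : centralizer R s} : IsUnit x ↔ IsUnit (x : A) := by
  refine ⟨fun h => h.map (centralizer R s).val, fun ⟨u, hu⟩ => ?_⟩
  have hinv : (↑u⁻¹ : A) ∈ centralizer R s := fun g hg =>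
    (Commute.units_inv_right (hu ▸ x.2 g hg : Commute g u)).eq
  exact isUnit_iff_exists.mpr
    ⟨⟨_, hinv⟩, Subtype.ext (by simp [← hu]), Subtype.ext (by simp [← hu])⟩

theorem spectrum_centralizer_eq {s : Set A} (x : centralizer R s) :
    spectrum R x = spectrum R (x : A) := by
  ext z
  rw [spectrum.mem_iff, spectrum.mem_iff, isUnit_centralizer_iff]
  rfl

end Subalgebra

theorem spectrum_op {R A : Type*} [CommSemiring R] [Ring A] [Algebra R A] (a : A) :
    spectrum R (op a) = spectrum R a := by
  ext z
  simp only [spectrum.mem_iff, MulOpposite.algebraMap_apply, ← op_sub, isUnit_op]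

theorem Commute.isUnit_sub_of_disjoint_spectrum {A : Type*} [NormedRing A] [NormedAlgebra ℂ A]
    [CompleteSpace A] {u v : A} (huv : Commute u v)
    (hσ : Disjoint (spectrum ℂ u) (spectrum ℂ v)) : IsUnit (u - v) := by
  set B := Subalgebra.centralizer ℂ (Set.centralizer {u, v})
  have hcomm : ∀ x ∈ ({u, v} : Set A), ∀ y ∈ ({u, v} : Set A), x * y = y * x := by
    rintro x (rfl | rfl) y (rfl | rfl)
    exacts [rfl, huv.eq, huv.eq.symm, rfl]
  have hu : u ∈ B := Set.subset_centralizer_centralizer (by simp)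
  have hv : v ∈ B := Set.subset_centralizer_centralizer (by simp)
  let : NormedCommRing B := { (inferInstance : NormedRing B) with
    mul_comm := fun x y =>
      Subtype.ext (Set.centralizer_centralizer_comm_of_comm hcomm _ x.2 _ y.2) }
  have : CompleteSpace B := (Set.isClosed_centralizer _).completeSpace_coe
  by_contra h
  obtain ⟨φ, hφ⟩ := WeakDual.CharacterSpace.exists_apply_eq_zero
    (a := (⟨u, hu⟩ : B) - ⟨v, hv⟩) fun h' => h (h'.map B.val)
  rw [map_sub, sub_eq_zero] at hφ
  refine hσ.ne_of_mem ?_ ?_ hφ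
  · exact (Subalgebra.spectrum_centralizer_eq (⟨u, hu⟩ : B)).subset
      (WeakDual.CharacterSpace.apply_mem_spectrum φ _)
  · exact (Subalgebra.spectrum_centralizer_eq (⟨v, hv⟩ : B)).subset
      (WeakDual.CharacterSpace.apply_mem_spectrum φ _)

namespace ContinuousLinearMap

section NormedField

variable {𝕜 E F : Type*} [NontriviallyNormedField 𝕜]
  [NormedAddCommGroup E] [NormedSpace 𝕜 E] [NormedAddCommGroup F] [NormedSpace 𝕜 F]

variable (𝕜 F) in
noncomputable def compLeftAlgHom : (E →L[𝕜] E) →ₐ[𝕜] ((F →L[𝕜] E) →L[𝕜] (F →L[𝕜] E)) where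
  toFun := compL 𝕜 F E E
  map_one' := rfl
  map_mul' _ _ := rfl
  map_zero' := map_zero _
  map_add' := map_add _
  commutes' _ := by ext; simp [Algebra.algebraMap_eq_smul_one]

variable (𝕜 E) in
noncomputable def compRightAlgHom : (F →L[𝕜] F)ᵐᵒᵖ →ₐ[𝕜] ((F →L[𝕜] E) →L[𝕜] (F →L[𝕜] E)) where
  toFun b := (compL 𝕜 F F E).flip b.unop
  map_one' := rfl
  map_mul' _ _ := rfl
  map_zero' := map_zero _
  map_add' _ _ := map_add _ _ _
  commutes' _ := by ext; simp [Algebra.algebraMap_eq_smul_one]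

@[simp] theorem compLeftAlgHom_apply (a : E →L[𝕜] E) (x : F →L[𝕜] E) :
    compLeftAlgHom 𝕜 F a x = a ∘L x := rfl

@[simp] theorem compRightAlgHom_apply (b : (F →L[𝕜] F)ᵐᵒᵖ) (x : F →L[𝕜] E) :
    compRightAlgHom 𝕜 E b x = x ∘L b.unop := rfl

def IsBlockDiagonal (T : E × F →L[𝕜] E × F) : Prop :=
  (∀ x : E, (T (x, 0)).2 = 0) ∧ ∀ y : F, (T (0, y)).1 = 0

theorem isBlockDiagonal_prodMap (p : E →L[𝕜] E) (q : F →L[𝕜] F) :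
    IsBlockDiagonal (p.prodMap q) := by
  simp [IsBlockDiagonal]

def offDiag (X : F →L[𝕜] E) (Y : E →L[𝕜] F) : E × F →L[𝕜] E × F :=
  (X ∘L snd 𝕜 E F).prod (Y ∘L fst 𝕜 E F)

@[simp] theorem offDiag_apply (X : F →L[𝕜] E) (Y : E →L[𝕜] F) (v : E × F) :
    offDiag X Y v = (X v.2, Y v.1) := rfl

theorem prodMap_mul_offDiag_sub (a : E →L[𝕜] E) (b : F →L[𝕜] F) (X : F →L[𝕜] E)
    (Y : E →L[𝕜] F) :
    a.prodMap b * offDiag X Y - offDiag X Y * a.prodMap b =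
      offDiag (a ∘L X - X ∘L b) (b ∘L Y - Y ∘L a) := by
  ext <;> simp

end NormedField

variable {E F : Type*} [NormedAddCommGroup E] [NormedSpace ℂ E] [CompleteSpace E]
  [NormedAddCommGroup F] [NormedSpace ℂ F]

theorem exists_comp_sub_comp_eq_of_disjoint_spectrum (a : E →L[ℂ] E) (b : F →L[ℂ] F)
    (hab : Disjoint (spectrum ℂ a) (spectrum ℂ b)) (c : F →L[ℂ] E) :
    ∃ x : F →L[ℂ] E, a ∘L x - x ∘L b = c := by
  have hcomm : Commute (compLeftAlgHom ℂ F a) (compRightAlgHom ℂ E (op b)) := by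
    ext; simp [comp_assoc]
  obtain ⟨u, hu⟩ := Commute.isUnit_sub_of_disjoint_spectrum
    (A := (F →L[ℂ] E) →L[ℂ] (F →L[ℂ] E)) hcomm <| hab.mono (AlgHom.spectrum_apply_subset _ _)
      ((AlgHom.spectrum_apply_subset _ _).trans (spectrum_op b).subset)
  refine ⟨(↑u⁻¹ : (F →L[ℂ] E) →L[ℂ] (F →L[ℂ] E)) c, ?_⟩
  simpa [hu] using congr($(u.mul_inv) c)

theorem exists_prodMap_commutator_eq_add_isBlockDiagonal [CompleteSpace F] (a : E →L[ℂ] E)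
    (b : F →L[ℂ] F) (hab : Disjoint (spectrum ℂ a) (spectrum ℂ b)) (D : E × F →L[ℂ] E × F) :
    ∃ X Λ : E × F →L[ℂ] E × F, IsBlockDiagonal Λ ∧
      a.prodMap b * X - X * a.prodMap b = D + Λ := by
  obtain ⟨x, hx⟩ :=
    exists_comp_sub_comp_eq_of_disjoint_spectrum a b hab (fst ℂ E F ∘L D ∘L inr ℂ E F)
  obtain ⟨y, hy⟩ :=
    exists_comp_sub_comp_eq_of_disjoint_spectrum b a hab.symm (snd ℂ E F ∘L D ∘L inl ℂ E F)
  refine ⟨offDiag x y,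
    (-(fst ℂ E F ∘L D ∘L inl ℂ E F)).prodMap (-(snd ℂ E F ∘L D ∘L inr ℂ E F)),
    isBlockDiagonal_prodMap _ _, ?_⟩
  rw [prodMap_mul_offDiag_sub, hx, hy]
  ext <;> simp [Prod.mk_zero_zero]

end ContinuousLinearMap

theorem exists_formal_block_diagonalisation {R : Type*} [Ring R] {P : R → Prop} {a : ℕ → R}
    (ha₀ : P (a 0)) (hsolve : ∀ D, ∃ X Λ, P Λ ∧ a 0 * X - X * a 0 = D + Λ) (N : ℕ) :
    ∃ M Λ : ℕ → R, M 0 = 1 ∧ Λ 0 = a 0 ∧ (∀ k, P (Λ k)) ∧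
      ∀ n < N, ∑ k ∈ range (n + 1), (a k * M (n - k) - M k * Λ (n - k)) = 0 := by
  induction N with
  | zero => exact ⟨fun _ => 1, fun _ => a 0, rfl, rfl, fun _ => ha₀, by simp⟩
  | succ N ih =>
    obtain ⟨M, Λ, hM₀, hΛ₀, hP, hsum⟩ := ih
    rcases N with _ | m
    · exact ⟨M, Λ, hM₀, hΛ₀, hP, by simp [hM₀, hΛ₀]⟩
    set D := a (m + 1) + ∑ k ∈ range m, (a (k + 1) * M (m - k) - M (k + 1) * Λ (m - k)) with hD
    obtain ⟨X, Λ', hΛ', hX⟩ := hsolve (-D)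
    refine ⟨Function.update M (m + 1) X, Function.update Λ (m + 1) Λ', by simp [hM₀],
      by simp [hΛ₀], fun k => ?_, fun n hn => ?_⟩
    · rcases eq_or_ne k (m + 1) with rfl | hk
      · simpa using hΛ'
      · simpa [hk] using hP k
    rcases Nat.lt_succ_iff_lt_or_eq.mp hn with hn | rfl
    · rw [← hsum n hn]
      refine sum_congr rfl fun k hk => ?_
      have := mem_range.mp hk
      simp only [Function.update_of_ne (show k ≠ m + 1 by omega),
        Function.update_of_ne (show n - k ≠ m + 1 by omega)]
    -- the terms `k = 0` and `k = m + 1` carry the new coefficients, the others are those of `D`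
    rw [sum_range_succ', sum_range_succ]
    have hmid : ∑ k ∈ range m, (a (k + 1) * Function.update M (m + 1) X (m + 1 - (k + 1)) -
        Function.update M (m + 1) X (k + 1) * Function.update Λ (m + 1) Λ' (m + 1 - (k + 1))) =
        ∑ k ∈ range m, (a (k + 1) * M (m - k) - M (k + 1) * Λ (m - k)) := by
      refine sum_congr rfl fun k hk => ?_
      have := mem_range.mp hk
      simp only [show m + 1 - (k + 1) = m - k by omega,
        Function.update_of_ne (show k + 1 ≠ m + 1 by omega),
        Function.update_of_ne (show m - k ≠ m + 1 by omega)]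
    simp only [hmid, Nat.sub_self, Nat.sub_zero, Function.update_self,
      Function.update_of_ne (show 0 ≠ m + 1 by omega), hM₀, hΛ₀, mul_one, one_mul]
    calc _ = D + (a 0 * X - X * a 0) - Λ' := by rw [hD]; abel
      _ = 0 := by rw [hX]; abel

section Asymptotics

variable {R : Type*} [NormedRing R] [NormedAlgebra ℂ R]

theorem isBigO_ofReal_pow_smul {N n : ℕ} (h : N ≤ n) (c : R) :
    (fun ρ : ℝ => (ρ : ℂ) ^ n • c) =O[𝓝 0] fun ρ => |ρ| ^ N := by
  refine IsBigO.of_bound ‖c‖ ?_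
  filter_upwards [Metric.closedBall_mem_nhds (0 : ℝ) one_pos] with ρ hρ
  have hρ : |ρ| ≤ 1 := by simpa using hρ
  calc ‖(ρ : ℂ) ^ n • c‖ = |ρ| ^ n * ‖c‖ := by simp [norm_smul]
    _ ≤ |ρ| ^ N * ‖c‖ := by gcongr ?_ * _; exact pow_le_pow_of_le_one (abs_nonneg ρ) hρ h
    _ = ‖c‖ * ‖|ρ| ^ N‖ := by simp [mul_comm]

theorem sum_range_smul_mul_sum_range_smul (z : ℂ) (f g : ℕ → R) (N : ℕ) :
    (∑ i ∈ range N, z ^ i • f i) * ∑ j ∈ range N, z ^ j • g j =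
      ∑ p ∈ range N ×ˢ range N, z ^ (p.1 + p.2) • (f p.1 * g p.2) := by
  simp only [sum_mul_sum, sum_product, smul_mul_smul_comm, pow_add]

theorem isBigO_sum_pow_smul_of_sum_antidiagonal_eq_zero {d : ℕ × ℕ → R} {N : ℕ}
    (hd : ∀ n < N, ∑ p ∈ antidiagonal n, d p = 0) :
    (fun ρ : ℝ => ∑ p ∈ range N ×ˢ range N, (ρ : ℂ) ^ (p.1 + p.2) • d p) =O[𝓝 0]
      fun ρ => |ρ| ^ N := by
  have hfiber (ρ : ℝ) := (sum_fiberwise_of_maps_to (s := range N ×ˢ range N)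
    (t := range (2 * N)) (g := fun p => p.1 + p.2)
    (fun p hp => by simp only [mem_product, mem_range] at hp ⊢; omega)
    (fun p => (ρ : ℂ) ^ (p.1 + p.2) • d p)).symm
  simp_rw [hfiber]
  refine IsBigO.fun_sum fun n _ => ?_
  have hterm (ρ : ℝ) :
      ∑ p ∈ range N ×ˢ range N with p.1 + p.2 = n, (ρ : ℂ) ^ (p.1 + p.2) • d p =
        (ρ : ℂ) ^ n • ∑ p ∈ range N ×ˢ range N with p.1 + p.2 = n, d p := by
    rw [smul_sum]
    exact sum_congr rfl fun p hp => by rw [(mem_filter.mp hp).2]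
  simp_rw [hterm]
  rcases lt_or_ge n N with hn | hn
  · have hfilter : {p ∈ range N ×ˢ range N | p.1 + p.2 = n} = antidiagonal n := by
      ext p
      simp only [mem_filter, mem_product, mem_range, HasAntidiagonal.mem_antidiagonal]
      omega
    simp only [hfilter, hd n hn, smul_zero]
    exact isBigO_zero _ _
  · exact isBigO_ofReal_pow_smul hn _

theorem isBigO_mul_sum_sub_sum_mul_sum {A : ℝ → R} {a M Λ : ℕ → R} {N : ℕ}
    (hA : (fun ρ : ℝ => A ρ - ∑ k ∈ range N, (ρ : ℂ) ^ k • a k) =O[𝓝 0] fun ρ => |ρ| ^ N)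
    (hcoeff : ∀ n < N, ∑ k ∈ range (n + 1), (a k * M (n - k) - M k * Λ (n - k)) = 0) :
    (fun ρ : ℝ => A ρ * (∑ k ∈ range N, (ρ : ℂ) ^ k • M k) -
      (∑ k ∈ range N, (ρ : ℂ) ^ k • M k) * ∑ k ∈ range N, (ρ : ℂ) ^ k • Λ k) =O[𝓝 0]
      fun ρ => |ρ| ^ N := by
  have hM : (fun ρ : ℝ => ∑ k ∈ range N, (ρ : ℂ) ^ k • M k) =O[𝓝 0] fun ρ => |ρ| ^ 0 :=
    IsBigO.fun_sum fun k _ => isBigO_ofReal_pow_smul k.zero_le _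
  have hhigh := hA.mul hM
  simp only [pow_zero, mul_one] at hhigh
  have hlow : (fun ρ : ℝ => (∑ k ∈ range N, (ρ : ℂ) ^ k • a k) *
      (∑ k ∈ range N, (ρ : ℂ) ^ k • M k) -
      (∑ k ∈ range N, (ρ : ℂ) ^ k • M k) * ∑ k ∈ range N, (ρ : ℂ) ^ k • Λ k) =O[𝓝 0]
      fun ρ => |ρ| ^ N := by
    simp_rw [sum_range_smul_mul_sum_range_smul, ← sum_sub_distrib, ← smul_sub]
    refine isBigO_sum_pow_smul_of_sum_antidiagonal_eq_zero fun n hn => ?_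
    rw [Nat.sum_antidiagonal_eq_sum_range_succ_mk]
    exact hcoeff n hn
  exact (hhigh.add hlow).congr (fun ρ => by noncomm_ring) fun _ => rfl

end Asymptotics

/-- block-diagonalisation for bounded operators, Section 2 of the paper.
Let `Ap : B(H⁺)` have spectrum with positive real part and `Am : B(H⁻)` spectrum with negative
real part, and let `A(ρ)` be a family of bounded operators on `H⁺ × H⁻` with a full asymptotic
expansion whose leading term is the block-diagonal operator `(x⁺, x⁻) ↦ (Ap x⁺, Am x⁻)`.  Then
for every `N` there are bounded operators `M₀ = I, M₁, …, M_{N-1}` and block-diagonal bounded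
operators `Λ₀, …, Λ_{N-1}` with
`A(ρ)·∑ ρ^k M_k - (∑ ρ^k M_k)·(∑ ρ^k Λ_k) = O(|ρ|^N)` as `ρ → 0`. -/
theorem block_diagonalisation_bounded_operators {Hp Hm : Type*}
    [NormedAddCommGroup Hp] [NormedSpace ℂ Hp] [CompleteSpace Hp]
    [NormedAddCommGroup Hm] [NormedSpace ℂ Hm] [CompleteSpace Hm]
    (Ap : Hp →L[ℂ] Hp) (Am : Hm →L[ℂ] Hm)
    (hAp : ∀ lam ∈ spectrum ℂ Ap, 0 < lam.re)
    (hAm : ∀ mu ∈ spectrum ℂ Am, mu.re < 0)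
    (A : ℝ → (Hp × Hm →L[ℂ] Hp × Hm)) (Ak : ℕ → (Hp × Hm →L[ℂ] Hp × Hm))
    (hexp : ∀ N : ℕ, ∃ C ε : ℝ, 0 < C ∧ 0 < ε ∧ ∀ ρ : ℝ, |ρ| ≤ ε →
      ‖A ρ - ∑ k ∈ Finset.range N, (ρ : ℂ) ^ k • Ak k‖ ≤ C * |ρ| ^ N)
    (hA0 : Ak 0 = Ap.prodMap Am) (N : ℕ) :
    ∃ M Λ : ℕ → (Hp × Hm →L[ℂ] Hp × Hm),
      M 0 = 1 ∧
      (∀ k < N, (∀ x : Hp, (Λ k (x, 0)).2 = 0) ∧ (∀ y : Hm, (Λ k (0, y)).1 = 0)) ∧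
      (fun ρ : ℝ =>
          A ρ * (∑ k ∈ Finset.range N, (ρ : ℂ) ^ k • M k)
            - (∑ k ∈ Finset.range N, (ρ : ℂ) ^ k • M k)
              * (∑ k ∈ Finset.range N, (ρ : ℂ) ^ k • Λ k))
        =O[nhds 0] fun ρ : ℝ => |ρ| ^ N := by
  have hσ : Disjoint (spectrum ℂ Ap) (spectrum ℂ Am) :=
    Set.disjoint_left.mpr fun z hp hm => lt_asymm (hAm z hm) (hAp z hp)
  obtain ⟨M, Λ, hM₀, -, hΛ, hcoeff⟩ := exists_formal_block_diagonalisation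
    (hA0 ▸ isBlockDiagonal_prodMap Ap Am)
    (hA0 ▸ exists_prodMap_commutator_eq_add_isBlockDiagonal Ap Am hσ) N
  refine ⟨M, Λ, hM₀, fun k _ => hΛ k, isBigO_mul_sum_sub_sum_mul_sum ?_ hcoeff⟩
  obtain ⟨C, ε, -, hε, hbound⟩ := hexp N
  refine IsBigO.of_bound C ?_
  filter_upwards [Metric.closedBall_mem_nhds (0 : ℝ) hε] with ρ hρ
  simpa using hbound ρ (by simpa using hρ)
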